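/- arXiv:math/0607620 — 4 statements merged into one kernel-verified Lean document; each statement's English description precedes it below -/
import Mathlib

section
/- Let a, b, c, d be positive real numbers with a > b and c > d, and let α, β be real numbers with 0 < α < 1, 0 < β < 1 and α + β = 1. Then equality a^α · c^β − b^α · d^β = (a − b)^α · (c − d)^β holds if and only if a/b = c/d. -/
/-!
Dividing by `a^α c^β` and writing `x = b/a`, `y = d/c`, the identity becomes
`x^α y^β + (1-x)^α (1-y)^β = 1`. By weighted AM–GM each product is at most the corresponding
arithmetic mean `α x + β y`, resp. `α (1-x) + β (1-y)`, and these means add up to `1`; so the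
identity holds iff both AM–GM inequalities are equalities, i.e. iff `x = y`.
-/

open Real

theorem geom_mean_add_geom_mean_one_sub_eq_one_iff {x y α β : ℝ} (hx₀ : 0 ≤ x) (hx₁ : x ≤ 1)
    (hy₀ : 0 ≤ y) (hy₁ : y ≤ 1) (hα : 0 < α) (hβ : 0 < β) (hαβ : α + β = 1) :
    x ^ α * y ^ β + (1 - x) ^ α * (1 - y) ^ β = 1 ↔ x = y := by
  constructor
  · intro h
    rw [← geom_mean_eq_arith_mean2_weighted_iff_of_pos hα hβ hx₀ hy₀ hαβ]
    linarith [geom_mean_le_arith_mean2_weighted hα.le hβ.le hx₀ hy₀ hαβ,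
      geom_mean_le_arith_mean2_weighted hα.le hβ.le (sub_nonneg.2 hx₁) (sub_nonneg.2 hy₁) hαβ]
  · rintro rfl
    have hαβ₀ : α + β ≠ 0 := by rw [hαβ]; exact one_ne_zero
    rw [← rpow_add' hx₀ hαβ₀, ← rpow_add' (sub_nonneg.2 hx₁) hαβ₀, hαβ, rpow_one, rpow_one]
    ring

theorem geom_mean_add_geom_mean_sub_eq_iff {a b c d α β : ℝ} (ha : 0 < a) (hc : 0 < c)
    (hb : 0 ≤ b) (hba : b ≤ a) (hd : 0 ≤ d) (hdc : d ≤ c)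
    (hα : 0 < α) (hβ : 0 < β) (hαβ : α + β = 1) :
    b ^ α * d ^ β + (a - b) ^ α * (c - d) ^ β = a ^ α * c ^ β ↔ b / a = d / c := by
  have hac : 0 < a ^ α * c ^ β := by positivity
  have hscale : ∀ p q : ℝ, 0 ≤ p → 0 ≤ q →
      (p / a) ^ α * (q / c) ^ β = p ^ α * q ^ β / (a ^ α * c ^ β) := fun p q hp hq => by
    rw [div_rpow hp ha.le, div_rpow hq hc.le, div_mul_div_comm]
  rw [← geom_mean_add_geom_mean_one_sub_eq_one_iff (div_nonneg hb ha.le)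
      ((div_le_one ha).2 hba) (div_nonneg hd hc.le) ((div_le_one hc).2 hdc) hα hβ hαβ,
    one_sub_div ha.ne', one_sub_div hc.ne', hscale b d hb hd,
    hscale _ _ (sub_nonneg.2 hba) (sub_nonneg.2 hdc), ← add_div, div_eq_one_iff_eq hac.ne']

theorem stmt_1_general (a b c d α β : ℝ)
    (ha : 0 < a) (hb : 0 < b) (hc : 0 < c) (hd : 0 < d)
    (hab : a > b) (hcd : c > d)
    (hα0 : 0 < α) (hβ0 : 0 < β)
    (hαβ : α + β = 1) :
    a ^ α * c ^ β - b ^ α * d ^ β = (a - b) ^ α * (c - d) ^ β ↔ a / b = c / d := by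
  rw [sub_eq_iff_eq_add', eq_comm,
    geom_mean_add_geom_mean_sub_eq_iff ha hc hb.le hab.le hd.le hcd.le hα0 hβ0 hαβ,
    ← inv_inj, inv_div, inv_div]

/-- Lemma 4 of the paper (equality case): for positive reals `a, b, c, d` with
`a > b`, `c > d`, and exponents `0 < α < 1`, `0 < β < 1` with `α + β = 1`, equality
`a^α * c^β - b^α * d^β = (a - b)^α * (c - d)^β` holds if and only if `a / b = c / d`. -/
theorem stmt_1 (a b c d α β : ℝ)
    (ha : 0 < a) (hb : 0 < b) (hc : 0 < c) (hd : 0 < d)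
    (hab : a > b) (hcd : c > d)
    (hα0 : 0 < α) (hα1 : α < 1) (hβ0 : 0 < β) (hβ1 : β < 1)
    (hαβ : α + β = 1) :
    a ^ α * c ^ β - b ^ α * d ^ β = (a - b) ^ α * (c - d) ^ β ↔ a / b = c / d :=
  stmt_1_general a b c d α β ha hb hc hd hab hcd hα0 hβ0 hαβ
end

section
/- (Bellman's inequality.) Let n ≥ 2, let a = (a₁, …, aₙ) and b = (b₁, …, bₙ) be two finite sequences of positive real numbers, and let p > 1 be a real number. Assume a₁^p − Σ_{i=2}^{n} aᵢ^p > 0 and b₁^p − Σ_{i=2}^{n} bᵢ^p > 0. Then (a₁^p − Σ_{i=2}^{n} aᵢ^p)^{1/p} + (b₁^p − Σ_{i=2}^{n} bᵢ^p)^{1/p} ≤ ((a₁ + b₁)^p − Σ_{i=2}^{n} (aᵢ + bᵢ)^p)^{1/p}. -/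
open Finset

/-- Bellman's inequality (Lemma 3 of the paper): if `a₁, …, aₙ` and `b₁, …, bₙ`
are positive reals, `p > 1`, and `a₁^p - ∑_{i=2}^n aᵢ^p > 0` and
`b₁^p - ∑_{i=2}^n bᵢ^p > 0`, then
`(a₁^p - ∑ aᵢ^p)^{1/p} + (b₁^p - ∑ bᵢ^p)^{1/p} ≤ ((a₁+b₁)^p - ∑ (aᵢ+bᵢ)^p)^{1/p}`. -/
theorem stmt_3 (n : ℕ) (hn : 2 ≤ n) (a b : ℕ → ℝ)
    (ha : ∀ i ∈ Finset.Icc 1 n, 0 < a i)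
    (hb : ∀ i ∈ Finset.Icc 1 n, 0 < b i)
    (p : ℝ) (hp : 1 < p)
    (hA : 0 < a 1 ^ p - ∑ i ∈ Finset.Icc 2 n, a i ^ p)
    (hB : 0 < b 1 ^ p - ∑ i ∈ Finset.Icc 2 n, b i ^ p) :
    (a 1 ^ p - ∑ i ∈ Finset.Icc 2 n, a i ^ p) ^ (1 / p)
      + (b 1 ^ p - ∑ i ∈ Finset.Icc 2 n, b i ^ p) ^ (1 / p)
      ≤ ((a 1 + b 1) ^ p - ∑ i ∈ Finset.Icc 2 n, (a i + b i) ^ p) ^ (1 / p) := by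
  have hp0 : (0:ℝ) < p := lt_trans one_pos hp
  have hp1 : p ≠ 0 := hp0.ne'
  set Sa := ∑ i ∈ Finset.Icc 2 n, a i ^ p with hSa
  set Sb := ∑ i ∈ Finset.Icc 2 n, b i ^ p with hSb
  set A := (a 1 ^ p - Sa) ^ (1 / p) with hAdef
  set B := (b 1 ^ p - Sb) ^ (1 / p) with hBdef
  have hApos : 0 < A := Real.rpow_pos_of_pos hA _
  have hBpos : 0 < B := Real.rpow_pos_of_pos hB _
  have hAp : A ^ p = a 1 ^ p - Sa := by
    rw [hAdef, ← Real.rpow_mul hA.le, one_div_mul_cancel hp1, Real.rpow_one]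
  have hBp : B ^ p = b 1 ^ p - Sb := by
    rw [hBdef, ← Real.rpow_mul hB.le, one_div_mul_cancel hp1, Real.rpow_one]
  -- index set: 0 plays the role of the extra coordinate
  have h0 : (0:ℕ) ∉ Finset.Icc 2 n := by simp
  set s : Finset ℕ := insert 0 (Finset.Icc 2 n) with hs
  set f : ℕ → ℝ := fun i => if i = 0 then A else a i with hf
  set g : ℕ → ℝ := fun i => if i = 0 then B else b i with hg
  have hmem : ∀ i ∈ Finset.Icc 2 n, i ∈ Finset.Icc 1 n := by
    intro i hi
    rw [Finset.mem_Icc] at hi ⊢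
    omega
  have hfpos : ∀ i ∈ s, 0 < f i := by
    intro i hi
    rcases Finset.mem_insert.1 hi with rfl | hi
    · simpa [hf] using hApos
    · have : i ≠ 0 := by rintro rfl; exact h0 hi
      simpa [hf, this] using ha i (hmem i hi)
  have hgpos : ∀ i ∈ s, 0 < g i := by
    intro i hi
    rcases Finset.mem_insert.1 hi with rfl | hi
    · simpa [hg] using hBpos
    · have : i ≠ 0 := by rintro rfl; exact h0 hi
      simpa [hg, this] using hb i (hmem i hi)
  have hsumf : ∑ i ∈ s, |f i| ^ p = a 1 ^ p := by
    rw [hs, Finset.sum_insert h0]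
    have : ∑ i ∈ Finset.Icc 2 n, |f i| ^ p = Sa := by
      apply Finset.sum_congr rfl
      intro i hi
      have hi0 : i ≠ 0 := by rintro rfl; exact h0 hi
      rw [hf]
      simp only [hi0, if_false]
      rw [abs_of_pos (ha i (hmem i hi))]
    rw [this]
    simp only [hf, if_pos rfl]
    rw [abs_of_pos hApos, hAp]
    ring
  have hsumg : ∑ i ∈ s, |g i| ^ p = b 1 ^ p := by
    rw [hs, Finset.sum_insert h0]
    have : ∑ i ∈ Finset.Icc 2 n, |g i| ^ p = Sb := by
      apply Finset.sum_congr rfl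
      intro i hi
      have hi0 : i ≠ 0 := by rintro rfl; exact h0 hi
      rw [hg]
      simp only [hi0, if_false]
      rw [abs_of_pos (hb i (hmem i hi))]
    rw [this]
    simp only [hg, if_pos rfl]
    rw [abs_of_pos hBpos, hBp]
    ring
  have hmink := Real.Lp_add_le s f g hp.le
  rw [hsumf, hsumg] at hmink
  have ha1 : 0 < a 1 := ha 1 (by rw [Finset.mem_Icc]; omega)
  have hb1 : 0 < b 1 := hb 1 (by rw [Finset.mem_Icc]; omega)
  have e1 : (a 1 ^ p) ^ (1/p) = a 1 := by
    rw [← Real.rpow_mul ha1.le, mul_one_div_cancel hp1, Real.rpow_one]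
  have e2 : (b 1 ^ p) ^ (1/p) = b 1 := by
    rw [← Real.rpow_mul hb1.le, mul_one_div_cancel hp1, Real.rpow_one]
  rw [e1, e2] at hmink
  -- raise both sides to p
  have hsumfg : ∑ i ∈ s, |f i + g i| ^ p
      = (A + B) ^ p + ∑ i ∈ Finset.Icc 2 n, (a i + b i) ^ p := by
    rw [hs, Finset.sum_insert h0]
    congr 1
    · simp only [hf, hg, if_pos rfl]
      rw [abs_of_pos (add_pos hApos hBpos)]
    · apply Finset.sum_congr rfl
      intro i hi
      have hi0 : i ≠ 0 := by rintro rfl; exact h0 hi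
      simp only [hf, hg, hi0, if_false]
      rw [abs_of_pos (add_pos (ha i (hmem i hi)) (hb i (hmem i hi)))]
  have hsum_nonneg : 0 ≤ ∑ i ∈ s, |f i + g i| ^ p :=
    Finset.sum_nonneg fun i _ => Real.rpow_nonneg (abs_nonneg _) _
  have hpow : ∑ i ∈ s, |f i + g i| ^ p ≤ (a 1 + b 1) ^ p := by
    have := Real.rpow_le_rpow (Real.rpow_nonneg hsum_nonneg _) hmink hp0.le
    rwa [← Real.rpow_mul hsum_nonneg, one_div_mul_cancel hp1, Real.rpow_one] at this
  rw [hsumfg] at hpow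
  have key : (A + B) ^ p ≤ (a 1 + b 1) ^ p - ∑ i ∈ Finset.Icc 2 n, (a i + b i) ^ p := by
    linarith
  have := Real.rpow_le_rpow (Real.rpow_nonneg (add_pos hApos hBpos).le _) key
    (by positivity : (0:ℝ) ≤ 1/p)
  rwa [← Real.rpow_mul (add_pos hApos hBpos).le, mul_one_div_cancel hp1,
    Real.rpow_one] at this
end

section
/- (Equality case of Bellman's inequality.) Let n ≥ 2, let a = (a₁, …, aₙ) and b = (b₁, …, bₙ) be two finite sequences of positive real numbers, and let p > 1 be a real number. Assume a₁^p − Σ_{i=2}^{n} aᵢ^p > 0 and b₁^p − Σ_{i=2}^{n} bᵢ^p > 0. Then equality (a₁^p − Σ_{i=2}^{n} aᵢ^p)^{1/p} + (b₁^p − Σ_{i=2}^{n} bᵢ^p)^{1/p} = ((a₁ + b₁)^p − Σ_{i=2}^{n} (aᵢ + bᵢ)^p)^{1/p} holds if and only if there is a positive constant υ with aᵢ = υ · bᵢ for all i = 1, …, n. -/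
/-!
Write `Q(x) = x₁ ^ p - ∑ xᵢ ^ p`. Adjoining the coordinate `Q(a) ^ (1 / p)` to `(a₂, …, aₙ)`
gives a vector of `p`-norm `a₁`, and likewise for `b`. Minkowski's inequality for these two
vectors is Bellman's inequality `Q(a) ^ (1 / p) + Q(b) ^ (1 / p) ≤ Q(a + b) ^ (1 / p)`. Minkowski's
inequality follows termwise from the convexity of `t ↦ t ^ p`, so by strict convexity its
equality case forces the two vectors to be proportional, hence `a` and `b` as well.
-/

open Finset

section Minkowski

variable {p c d u v : ℝ}

lemma add_eq_mul_convex_comb (hc : 0 < c) (hd : 0 < d) (u v : ℝ) :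
    u + v = (c + d) * (c / (c + d) * (u / c) + d / (c + d) * (v / d)) := by
  field_simp

lemma add_rpow_le_mul_convex_comb (hp : 1 ≤ p) (hc : 0 < c) (hd : 0 < d) (hu : 0 ≤ u)
    (hv : 0 ≤ v) :
    (u + v) ^ p ≤ (c + d) ^ p * (c / (c + d) * (u / c) ^ p + d / (c + d) * (v / d) ^ p) := by
  rw [add_eq_mul_convex_comb hc hd, Real.mul_rpow (by positivity) (by positivity)]
  gcongr
  exact (convexOn_rpow hp).2 (Set.mem_Ici.2 (by positivity)) (Set.mem_Ici.2 (by positivity))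
    (by positivity) (by positivity) (by field_simp)

lemma add_rpow_lt_mul_convex_comb (hp : 1 < p) (hc : 0 < c) (hd : 0 < d) (hu : 0 ≤ u)
    (hv : 0 ≤ v) (huv : u / c ≠ v / d) :
    (u + v) ^ p < (c + d) ^ p * (c / (c + d) * (u / c) ^ p + d / (c + d) * (v / d) ^ p) := by
  rw [add_eq_mul_convex_comb hc hd, Real.mul_rpow (by positivity) (by positivity)]
  gcongr
  exact (strictConvexOn_rpow hp).2 (Set.mem_Ici.2 (by positivity)) (Set.mem_Ici.2 (by positivity))
    huv (by positivity) (by positivity) (by field_simp)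

variable {ι : Type*} {s : Finset ι} {f g : ι → ℝ}

lemma sum_div_rpow_eq_one (hc : 0 < c) (hf : ∀ i ∈ s, 0 ≤ f i)
    (hfc : ∑ i ∈ s, f i ^ p = c ^ p) : ∑ i ∈ s, (f i / c) ^ p = 1 := by
  rw [sum_congr rfl fun i hi => Real.div_rpow (hf i hi) hc.le p, ← sum_div, hfc,
    div_self (Real.rpow_pos_of_pos hc p).ne']

lemma sum_mul_convex_comb_eq (hc : 0 < c) (hd : 0 < d) (hf : ∀ i ∈ s, 0 ≤ f i)
    (hg : ∀ i ∈ s, 0 ≤ g i) (hfc : ∑ i ∈ s, f i ^ p = c ^ p) (hgd : ∑ i ∈ s, g i ^ p = d ^ p) :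
    ∑ i ∈ s, (c + d) ^ p * (c / (c + d) * (f i / c) ^ p + d / (c + d) * (g i / d) ^ p)
      = (c + d) ^ p := by
  rw [← mul_sum, sum_add_distrib, ← mul_sum, ← mul_sum, sum_div_rpow_eq_one hc hf hfc,
    sum_div_rpow_eq_one hd hg hgd]
  field_simp

lemma sum_add_rpow_le (hp : 1 ≤ p) (hc : 0 < c) (hd : 0 < d) (hf : ∀ i ∈ s, 0 ≤ f i)
    (hg : ∀ i ∈ s, 0 ≤ g i) (hfc : ∑ i ∈ s, f i ^ p = c ^ p) (hgd : ∑ i ∈ s, g i ^ p = d ^ p) :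
    ∑ i ∈ s, (f i + g i) ^ p ≤ (c + d) ^ p :=
  (sum_le_sum fun i hi => add_rpow_le_mul_convex_comb hp hc hd (hf i hi) (hg i hi)).trans_eq
    (sum_mul_convex_comb_eq hc hd hf hg hfc hgd)

lemma div_eq_div_of_sum_add_rpow_eq (hp : 1 < p) (hc : 0 < c) (hd : 0 < d)
    (hf : ∀ i ∈ s, 0 ≤ f i) (hg : ∀ i ∈ s, 0 ≤ g i) (hfc : ∑ i ∈ s, f i ^ p = c ^ p)
    (hgd : ∑ i ∈ s, g i ^ p = d ^ p) (heq : ∑ i ∈ s, (f i + g i) ^ p = (c + d) ^ p) :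
    ∀ i ∈ s, f i / c = g i / d := by
  by_contra! hne
  obtain ⟨i, hi, hne⟩ := hne
  have hlt := sum_lt_sum (fun j hj => add_rpow_le_mul_convex_comb hp.le hc hd (hf j hj) (hg j hj))
    ⟨i, hi, add_rpow_lt_mul_convex_comb hp hc hd (hf i hi) (hg i hi) hne⟩
  rw [sum_mul_convex_comb_eq hc hd hf hg hfc hgd, heq] at hlt
  exact hlt.false

end Minkowski

section Bellman

variable {ι : Type*} {s : Finset ι} {p x₀ y₀ : ℝ} {x y : ι → ℝ}

noncomputable def bellmanForm (s : Finset ι) (p x₀ : ℝ) (x : ι → ℝ) : ℝ :=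
  x₀ ^ p - ∑ i ∈ s, x i ^ p

lemma bellmanForm_mul_of_eq_mul {t : ℝ} (ht : 0 ≤ t) (hy₀ : 0 ≤ y₀) (hy : ∀ i ∈ s, 0 ≤ y i)
    (hxy : ∀ i ∈ s, x i = t * y i) :
    bellmanForm s p (t * y₀) x = t ^ p * bellmanForm s p y₀ y := by
  have hsum : ∑ i ∈ s, x i ^ p = t ^ p * ∑ i ∈ s, y i ^ p := by
    rw [mul_sum]
    exact sum_congr rfl fun i hi => by rw [hxy i hi, Real.mul_rpow ht (hy i hi)]
  rw [bellmanForm, bellmanForm, hsum, Real.mul_rpow ht hy₀]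
  ring

lemma sum_insertNone_rpow_eq (hp : p ≠ 0) (hQ : 0 ≤ bellmanForm s p x₀ x) :
    ∑ o ∈ s.insertNone, o.elim (bellmanForm s p x₀ x ^ (1 / p)) x ^ p = x₀ ^ p := by
  rw [sum_insertNone, Option.elim, one_div, Real.rpow_inv_rpow hQ hp, bellmanForm]
  simp

theorem rpow_add_le_bellmanForm_add (hp : 1 ≤ p) (hx₀ : 0 < x₀) (hy₀ : 0 < y₀)
    (hx : ∀ i ∈ s, 0 ≤ x i) (hy : ∀ i ∈ s, 0 ≤ y i)
    (hQx : 0 ≤ bellmanForm s p x₀ x) (hQy : 0 ≤ bellmanForm s p y₀ y) :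
    (bellmanForm s p x₀ x ^ (1 / p) + bellmanForm s p y₀ y ^ (1 / p)) ^ p
      ≤ bellmanForm s p (x₀ + y₀) (fun i => x i + y i) := by
  have h := sum_add_rpow_le hp hx₀ hy₀
    (forall_mem_insertNone.2 ⟨Real.rpow_nonneg hQx _, hx⟩)
    (forall_mem_insertNone.2 ⟨Real.rpow_nonneg hQy _, hy⟩)
    (sum_insertNone_rpow_eq (by positivity) hQx) (sum_insertNone_rpow_eq (by positivity) hQy)
  rw [sum_insertNone] at h
  exact le_sub_iff_add_le.2 h

theorem bellmanForm_rpow_add_eq_iff (hp : 1 < p) (hx₀ : 0 < x₀) (hy₀ : 0 < y₀)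
    (hx : ∀ i ∈ s, 0 ≤ x i) (hy : ∀ i ∈ s, 0 ≤ y i)
    (hQx : 0 ≤ bellmanForm s p x₀ x) (hQy : 0 ≤ bellmanForm s p y₀ y) :
    bellmanForm s p x₀ x ^ (1 / p) + bellmanForm s p y₀ y ^ (1 / p)
        = bellmanForm s p (x₀ + y₀) (fun i => x i + y i) ^ (1 / p)
      ↔ ∃ υ : ℝ, 0 < υ ∧ x₀ = υ * y₀ ∧ ∀ i ∈ s, x i = υ * y i := by
  have hp0 : p ≠ 0 := by positivity
  constructor
  · intro heq
    -- Bellman's inequality makes the right-hand side nonnegative, so its `p`-th root can be undone.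
    have hQxy : 0 ≤ bellmanForm s p (x₀ + y₀) (fun i => x i + y i) :=
      le_trans (by positivity) (rpow_add_le_bellmanForm_add hp.le hx₀ hy₀ hx hy hQx hQy)
    have hpow : (bellmanForm s p x₀ x ^ (1 / p) + bellmanForm s p y₀ y ^ (1 / p)) ^ p
        = bellmanForm s p (x₀ + y₀) (fun i => x i + y i) := by
      rw [heq, one_div, Real.rpow_inv_rpow hQxy hp0]
    have hprop := div_eq_div_of_sum_add_rpow_eq hp hx₀ hy₀
      (forall_mem_insertNone.2 ⟨Real.rpow_nonneg hQx _, hx⟩)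
      (forall_mem_insertNone.2 ⟨Real.rpow_nonneg hQy _, hy⟩)
      (sum_insertNone_rpow_eq hp0 hQx) (sum_insertNone_rpow_eq hp0 hQy)
      (by rw [sum_insertNone]; exact eq_sub_iff_add_eq.1 hpow)
    refine ⟨x₀ / y₀, by positivity, by field_simp, fun i hi => ?_⟩
    have hi' : x i / x₀ = y i / y₀ := (forall_mem_insertNone.1 hprop).2 i hi
    field_simp at hi' ⊢
    linarith
  · rintro ⟨υ, hυ, rfl, hxy⟩
    have hQx' : bellmanForm s p (υ * y₀) x = υ ^ p * bellmanForm s p y₀ y :=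
      bellmanForm_mul_of_eq_mul hυ.le hy₀.le hy hxy
    have hQxy' : bellmanForm s p (υ * y₀ + y₀) (fun i => x i + y i)
        = (υ + 1) ^ p * bellmanForm s p y₀ y := by
      rw [show υ * y₀ + y₀ = (υ + 1) * y₀ by ring]
      exact bellmanForm_mul_of_eq_mul (by positivity) hy₀.le hy
        fun i hi => by rw [hxy i hi]; ring
    rw [hQx', hQxy', Real.mul_rpow (by positivity) hQy, Real.mul_rpow (by positivity) hQy,
      one_div, Real.rpow_rpow_inv hυ.le hp0, Real.rpow_rpow_inv (by positivity) hp0]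
    ring

end Bellman

/-- Equality case of Bellman's inequality (Lemma 3 of the paper): under the same
hypotheses, equality holds if and only if the sequence `a` is a positive multiple
of the sequence `b`. -/
theorem stmt_4 (n : ℕ) (hn : 2 ≤ n) (a b : ℕ → ℝ)
    (ha : ∀ i ∈ Finset.Icc 1 n, 0 < a i)
    (hb : ∀ i ∈ Finset.Icc 1 n, 0 < b i)
    (p : ℝ) (hp : 1 < p)
    (hA : 0 < a 1 ^ p - ∑ i ∈ Finset.Icc 2 n, a i ^ p)
    (hB : 0 < b 1 ^ p - ∑ i ∈ Finset.Icc 2 n, b i ^ p) :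
    (a 1 ^ p - ∑ i ∈ Finset.Icc 2 n, a i ^ p) ^ (1 / p)
        + (b 1 ^ p - ∑ i ∈ Finset.Icc 2 n, b i ^ p) ^ (1 / p)
        = ((a 1 + b 1) ^ p - ∑ i ∈ Finset.Icc 2 n, (a i + b i) ^ p) ^ (1 / p)
      ↔ ∃ υ : ℝ, 0 < υ ∧ ∀ i ∈ Finset.Icc 1 n, a i = υ * b i := by
  have hIcc : Icc 1 n = insert 1 (Icc 2 n) := (insert_Icc_succ_left_eq_Icc (by omega)).symm
  have h1 : 1 ∈ Icc 1 n := hIcc ▸ mem_insert_self 1 _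
  have hsub : ∀ i ∈ Icc 2 n, i ∈ Icc 1 n := fun i hi => hIcc ▸ mem_insert_of_mem hi
  refine (bellmanForm_rpow_add_eq_iff hp (ha 1 h1) (hb 1 h1) (fun i hi => (ha i (hsub i hi)).le)
    (fun i hi => (hb i (hsub i hi)).le) hA.le hB.le).trans ?_
  simp only [hIcc, forall_mem_insert]
end

section
/- Let a₁, a₂, b₁, b₂ be positive real numbers and p ≥ 1 a real number, and assume a₁^p − a₂^p > 0 and b₁^p − b₂^p > 0. Then (a₁^p − a₂^p)^{1/p} + (b₁^p − b₂^p)^{1/p} ≤ ((a₁ + b₁)^p − (a₂ + b₂)^p)^{1/p}. -/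
open Real

/-- The two-term case of Bellman's inequality (for `p ≥ 1`): if `a₁, a₂, b₁, b₂` are
positive reals with `a₁^p - a₂^p > 0` and `b₁^p - b₂^p > 0`, then
`(a₁^p - a₂^p)^{1/p} + (b₁^p - b₂^p)^{1/p} ≤ ((a₁+b₁)^p - (a₂+b₂)^p)^{1/p}`. -/
theorem stmt_5 (a₁ a₂ b₁ b₂ p : ℝ)
    (ha₁ : 0 < a₁) (ha₂ : 0 < a₂) (hb₁ : 0 < b₁) (hb₂ : 0 < b₂)
    (hp : 1 ≤ p)
    (hA : 0 < a₁ ^ p - a₂ ^ p) (hB : 0 < b₁ ^ p - b₂ ^ p) :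
    (a₁ ^ p - a₂ ^ p) ^ (1 / p) + (b₁ ^ p - b₂ ^ p) ^ (1 / p)
      ≤ ((a₁ + b₁) ^ p - (a₂ + b₂) ^ p) ^ (1 / p) := by
  have hp0 : 0 < p := lt_of_lt_of_le one_pos hp
  set x := (a₁ ^ p - a₂ ^ p) ^ (1 / p) with hxdef
  set y := (b₁ ^ p - b₂ ^ p) ^ (1 / p) with hydef
  have hx : 0 < x := Real.rpow_pos_of_pos hA _
  have hy : 0 < y := Real.rpow_pos_of_pos hB _
  have hxp : x ^ p = a₁ ^ p - a₂ ^ p := by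
    rw [hxdef, ← Real.rpow_mul hA.le, one_div, inv_mul_cancel₀ hp0.ne', Real.rpow_one]
  have hyp : y ^ p = b₁ ^ p - b₂ ^ p := by
    rw [hydef, ← Real.rpow_mul hB.le, one_div, inv_mul_cancel₀ hp0.ne', Real.rpow_one]
  -- Minkowski for the two vectors (x, a₂) and (y, b₂)
  have hmink := Real.Lp_add_le (Finset.univ : Finset (Fin 2)) ![x, a₂] ![y, b₂] hp
  simp only [Fin.sum_univ_two, Matrix.cons_val_zero, Matrix.cons_val_one, Matrix.head_cons]
    at hmink
  rw [abs_of_pos hx, abs_of_pos ha₂, abs_of_pos hy, abs_of_pos hb₂,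
    abs_of_pos (by positivity : (0:ℝ) < x + y), abs_of_pos (by positivity : (0:ℝ) < a₂ + b₂),
    hxp, hyp] at hmink
  have ha₁' : a₁ ^ p - a₂ ^ p + a₂ ^ p = a₁ ^ p := by ring
  have hb₁' : b₁ ^ p - b₂ ^ p + b₂ ^ p = b₁ ^ p := by ring
  rw [ha₁', hb₁', ← Real.rpow_mul ha₁.le, ← Real.rpow_mul hb₁.le,
    mul_one_div, div_self hp0.ne'] at hmink
  simp only [Real.rpow_one] at hmink
  -- hmink : ((x+y)^p + (a₂+b₂)^p)^(1/p) ≤ a₁ + b₁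
  have key : (x + y) ^ p + (a₂ + b₂) ^ p ≤ (a₁ + b₁) ^ p := by
    have h1 : (((x + y) ^ p + (a₂ + b₂) ^ p) ^ (1 / p)) ^ p ≤ (a₁ + b₁) ^ p :=
      Real.rpow_le_rpow (Real.rpow_nonneg (by positivity) _) hmink hp0.le
    rwa [← Real.rpow_mul (by positivity), one_div, inv_mul_cancel₀ hp0.ne',
      Real.rpow_one] at h1
  have key2 : (x + y) ^ p ≤ (a₁ + b₁) ^ p - (a₂ + b₂) ^ p := by linarith
  calc x + y = ((x + y) ^ p) ^ (1 / p) := by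
        rw [← Real.rpow_mul (by positivity), mul_one_div, div_self hp0.ne', Real.rpow_one]
    _ ≤ ((a₁ + b₁) ^ p - (a₂ + b₂) ^ p) ^ (1 / p) :=
        Real.rpow_le_rpow (by positivity) key2 (by positivity)
end
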